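/- For every integer n ≥ 4, γ_{2t}(K_n □ K_{n+2}) equals (3n+4)/2 if n is even, (3n+3)/2 if n ≡ 1 (mod 4), and (3n+5)/2 if n ≡ 3 (mod 4). -/

import Mathlib

open SimpleGraph

/-- `S` is a total 2-dominating set of `G`: every vertex has at least 2 neighbors in `S`. -/
def TotalTwoDom {V : Type*} (G : SimpleGraph V) (S : Set V) : Prop :=
  ∀ v : V, 2 ≤ (S ∩ {u | G.Adj v u}).ncard

/-- The total 2-domination number of `G`. -/
noncomputable def gamma2t {V : Type*} [Fintype V] (G : SimpleGraph V) : ℕ :=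
  sInf {k | ∃ S : Set V, TotalTwoDom G S ∧ S.ncard = k}

/-- The complete graph on `n` vertices. -/
def K (n : ℕ) : SimpleGraph (Fin n) := ⊤

/-!
A cell `v` of the rook's graph `K_α □ K_β` has `r + c - 2[v ∈ S]` neighbours in `S`, where `r`
and `c` count the cells of `S` in its row and its column. So `S` is total 2-dominating iff
`r + c ≥ 2` everywhere and `r + c ≥ 4` on `S`.

Lower bound: an empty row (column) forces two cells in every column (row). Otherwise let `a` and
`b` be the numbers of rows and columns holding a single cell of `S`. Such a cell lies in a column
(row) with at least three cells, so `a + b ≤ |S|`, and counting row by row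
`6|α| + b ≤ 3|S| + 3a`; symmetrically `6|β| + a ≤ 3|S| + 3b`. Hence `4|S| ≥ 3(|α| + |β|)`.

Upper bound: `p` vertical bars of at least three cells covering `n - k` rows, and `k` horizontal
ones covering the other `m - p` columns, form a total 2-dominating set of `n + m - p - k` cells.
-/

open Finset

abbrev rookGraph (α β : Type*) : SimpleGraph (α × β) := (⊤ : SimpleGraph α) □ (⊤ : SimpleGraph β)

section Rook

variable {α β : Type*}

theorem rookGraph_adj {v u : α × β} :
    (rookGraph α β).Adj v u ↔ u ≠ v ∧ (u.1 = v.1 ∨ u.2 = v.2) := by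
  rw [boxProd_adj, top_adj, top_adj, ne_eq, ne_eq, ne_eq, Prod.ext_iff]
  tauto

def rowCard [DecidableEq α] (F : Finset (α × β)) (i : α) : ℕ := #{u ∈ F | u.1 = i}

def colCard [DecidableEq β] (F : Finset (α × β)) (j : β) : ℕ := #{u ∈ F | u.2 = j}

theorem card_rookNeighbors_add [DecidableEq α] [DecidableEq β] (F : Finset (α × β)) (v : α × β) :
    #{u ∈ F | u ≠ v ∧ (u.1 = v.1 ∨ u.2 = v.2)} + (if v ∈ F then 2 else 0) =
      rowCard F v.1 + colCard F v.2 := by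
  have hlines : rowCard F v.1 + colCard F v.2 =
      #{u ∈ F | u.1 = v.1 ∨ u.2 = v.2} + #{u ∈ F | u = v} := by
    rw [rowCard, colCard, ← card_union_add_card_inter, ← filter_or, ← filter_and]
    simp only [← Prod.ext_iff]
  have hself : #{u ∈ F | u.1 = v.1 ∨ u.2 = v.2} =
      #{u ∈ F | u ≠ v ∧ (u.1 = v.1 ∨ u.2 = v.2)} + #{u ∈ F | u = v} := by
    rw [← card_filter_add_card_filter_not (s := {u ∈ F | u.1 = v.1 ∨ u.2 = v.2}) (· ≠ v),
      filter_filter, filter_filter]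
    congr 2 <;> ext u <;> simp only [mem_filter] <;> aesop
  have hv : #{u ∈ F | u = v} = if v ∈ F then 1 else 0 := by
    rw [filter_eq']
    split_ifs <;> simp
  split_ifs at hv ⊢ <;> omega

theorem totalTwoDom_rookGraph_iff [DecidableEq α] [DecidableEq β] {F : Finset (α × β)} :
    TotalTwoDom (rookGraph α β) ↑F ↔
      ∀ v, 2 + (if v ∈ F then 2 else 0) ≤ rowCard F v.1 + colCard F v.2 := by
  have hneighbors (v : α × β) : ((↑F : Set (α × β)) ∩ {u | (rookGraph α β).Adj v u}).ncard =
      #{u ∈ F | u ≠ v ∧ (u.1 = v.1 ∨ u.2 = v.2)} := by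
    rw [← Set.ncard_coe_finset, coe_filter]
    congr 1
    ext u
    simp only [Set.mem_inter_iff, mem_coe, Set.mem_ofPred_eq, rookGraph_adj]
  refine forall_congr' fun v => ?_
  rw [hneighbors, ← card_rookNeighbors_add]
  split_ifs <;> omega

theorem TotalTwoDom.four_le_rowCard_add_colCard [DecidableEq α] [DecidableEq β]
    {F : Finset (α × β)} (hF : TotalTwoDom (rookGraph α β) ↑F) {v : α × β} (hv : v ∈ F) :
    4 ≤ rowCard F v.1 + colCard F v.2 := by
  simpa [hv] using totalTwoDom_rookGraph_iff.1 hF v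

theorem TotalTwoDom.two_le_rowCard_add_colCard [DecidableEq α] [DecidableEq β]
    {F : Finset (α × β)} (hF : TotalTwoDom (rookGraph α β) ↑F) (v : α × β) :
    2 ≤ rowCard F v.1 + colCard F v.2 :=
  le_of_add_le_left (totalTwoDom_rookGraph_iff.1 hF v)

theorem rowCard_map_prodComm [DecidableEq β] (F : Finset (α × β)) (j : β) :
    rowCard (F.map (Equiv.prodComm α β).toEmbedding) j = colCard F j := by
  rw [rowCard, colCard, filter_map, card_map]
  rfl

theorem colCard_map_prodComm [DecidableEq α] (F : Finset (α × β)) (i : α) :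
    colCard (F.map (Equiv.prodComm α β).toEmbedding) i = rowCard F i := by
  rw [rowCard, colCard, filter_map, card_map]
  rfl

theorem TotalTwoDom.map_prodComm [DecidableEq α] [DecidableEq β] {F : Finset (α × β)}
    (hF : TotalTwoDom (rookGraph α β) ↑F) :
    TotalTwoDom (rookGraph β α) ↑(F.map (Equiv.prodComm α β).toEmbedding) := by
  rw [totalTwoDom_rookGraph_iff] at hF ⊢
  intro v
  simpa [rowCard_map_prodComm, colCard_map_prodComm, add_comm (colCard F _)] using hF v.swap

theorem sum_rowCard [Fintype α] [DecidableEq α] (F : Finset (α × β)) : ∑ i, rowCard F i = #F :=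
  (card_eq_sum_card_fiberwise fun u _ => mem_coe.2 (mem_univ u.1)).symm

theorem sum_colCard [Fintype β] [DecidableEq β] (F : Finset (α × β)) : ∑ j, colCard F j = #F :=
  (card_eq_sum_card_fiberwise fun u _ => mem_coe.2 (mem_univ u.2)).symm

theorem card_filter_fiber_eq_one {γ δ : Type*} [Fintype δ] [DecidableEq δ] (s : Finset γ)
    (f : γ → δ) : #{x ∈ s | #{y ∈ s | f y = f x} = 1} = #{d | #{y ∈ s | f y = d} = 1} := by
  rw [card_eq_sum_card_fiberwise (f := f) (t := {d | #{y ∈ s | f y = d} = 1})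
    fun x hx => by simpa using (mem_filter.1 hx).2, card_eq_sum_ones]
  refine sum_congr rfl fun d hd => ?_
  have hd : #{y ∈ s | f y = d} = 1 := (mem_filter.1 hd).2
  rw [filter_filter]
  exact (congrArg card (filter_congr fun x _ => ⟨And.right, fun h => ⟨h ▸ hd, h⟩⟩)).trans hd

theorem card_filter_rowCard_eq_one [Fintype α] [DecidableEq α] (F : Finset (α × β)) :
    #{u ∈ F | rowCard F u.1 = 1} = #{i | rowCard F i = 1} :=
  card_filter_fiber_eq_one F Prod.fst

theorem card_filter_colCard_eq_one [Fintype β] [DecidableEq β] (F : Finset (α × β)) :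
    #{u ∈ F | colCard F u.2 = 1} = #{j | colCard F j = 1} :=
  card_filter_fiber_eq_one F Prod.snd

theorem TotalTwoDom.card_lightRows_add_card_lightCols_le [Fintype α] [Fintype β]
    [DecidableEq α] [DecidableEq β] {F : Finset (α × β)} (hF : TotalTwoDom (rookGraph α β) ↑F) :
    #{i | rowCard F i = 1} + #{j | colCard F j = 1} ≤ #F := by
  have hdisj (u) (hu : u ∈ F) (hcol : colCard F u.2 = 1) : ¬rowCard F u.1 = 1 := by
    have := hF.four_le_rowCard_add_colCard hu
    omega
  rw [← card_filter_rowCard_eq_one, ← card_filter_colCard_eq_one]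
  calc _ ≤ #{u ∈ F | rowCard F u.1 = 1} + #{u ∈ F | ¬rowCard F u.1 = 1} :=
        add_le_add_right (card_le_card (monotone_filter_right _ hdisj)) _
    _ = #F := card_filter_add_card_filter_not _

theorem TotalTwoDom.six_mul_card_add_card_lightCols_le [Fintype α] [Fintype β]
    [DecidableEq α] [DecidableEq β] {F : Finset (α × β)} (hF : TotalTwoDom (rookGraph α β) ↑F)
    (hrow : ∀ i, rowCard F i ≠ 0) :
    6 * Fintype.card α + #{j | colCard F j = 1} ≤ 3 * #F + 3 * #{i | rowCard F i = 1} := by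
  set L := {u ∈ F | colCard F u.2 = 1}
  have hrowL (i : α) :
      6 + rowCard L i ≤ 3 * rowCard F i + 3 * if rowCard F i = 1 then 1 else 0 := by
    have hle : rowCard L i ≤ rowCard F i :=
      card_le_card (monotone_filter_left _ (filter_subset _ F))
    by_cases h3 : 3 ≤ rowCard F i
    · split_ifs <;> omega
    have hL : rowCard L i = 0 := by
      refine card_eq_zero.2 (filter_eq_empty_iff.2 fun u hu hui => ?_)
      obtain ⟨huF, hcol⟩ := mem_filter.1 hu
      have := hF.four_le_rowCard_add_colCard huF
      rw [hui] at this
      omega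
    have := hrow i
    split_ifs <;> omega
  calc 6 * Fintype.card α + #{j | colCard F j = 1} = ∑ i, (6 + rowCard L i) := by
        rw [sum_add_distrib, sum_rowCard, card_filter_colCard_eq_one, sum_const, card_univ,
          smul_eq_mul, mul_comm]
    _ ≤ ∑ i, (3 * rowCard F i + 3 * if rowCard F i = 1 then 1 else 0) :=
        sum_le_sum fun i _ => hrowL i
    _ = 3 * #F + 3 * #{i | rowCard F i = 1} := by
        rw [sum_add_distrib, ← mul_sum, ← mul_sum, sum_rowCard, sum_boole, Nat.cast_id]

theorem TotalTwoDom.six_mul_card_add_card_lightRows_le [Fintype α] [Fintype β]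
    [DecidableEq α] [DecidableEq β] {F : Finset (α × β)} (hF : TotalTwoDom (rookGraph α β) ↑F)
    (hcol : ∀ j, colCard F j ≠ 0) :
    6 * Fintype.card β + #{i | rowCard F i = 1} ≤ 3 * #F + 3 * #{j | colCard F j = 1} := by
  simpa only [rowCard_map_prodComm, colCard_map_prodComm, card_map] using
    hF.map_prodComm.six_mul_card_add_card_lightCols_le (by simpa [rowCard_map_prodComm])

theorem TotalTwoDom.two_mul_card_le_of_rowCard_eq_zero [Fintype β] [DecidableEq α]
    [DecidableEq β] {F : Finset (α × β)} (hF : TotalTwoDom (rookGraph α β) ↑F) {i : α}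
    (hi : rowCard F i = 0) : 2 * Fintype.card β ≤ #F :=
  calc 2 * Fintype.card β = ∑ _j : β, 2 := by rw [sum_const, card_univ, smul_eq_mul, mul_comm]
    _ ≤ ∑ j, colCard F j := sum_le_sum fun j _ => by
        simpa [hi] using hF.two_le_rowCard_add_colCard (i, j)
    _ = #F := sum_colCard F

theorem TotalTwoDom.two_mul_card_le_of_colCard_eq_zero [Fintype α] [DecidableEq α]
    [DecidableEq β] {F : Finset (α × β)} (hF : TotalTwoDom (rookGraph α β) ↑F) {j : β}
    (hj : colCard F j = 0) : 2 * Fintype.card α ≤ #F := by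
  simpa using hF.map_prodComm.two_mul_card_le_of_rowCard_eq_zero
    (by rwa [rowCard_map_prodComm])

theorem TotalTwoDom.rook_card_lower_bound [Fintype α] [Fintype β] [DecidableEq α]
    [DecidableEq β] {F : Finset (α × β)} (hF : TotalTwoDom (rookGraph α β) ↑F)
    (hcard : Fintype.card β = Fintype.card α + 2) (hα : 4 ≤ Fintype.card α) :
    3 * Fintype.card α + 3 ≤ 2 * #F ∧
      (Fintype.card α % 4 = 3 → 3 * Fintype.card α + 5 ≤ 2 * #F) := by
  by_cases hrow : ∃ i, rowCard F i = 0
  · obtain ⟨i, hi⟩ := hrow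
    have := hF.two_mul_card_le_of_rowCard_eq_zero hi
    omega
  by_cases hcol : ∃ j, colCard F j = 0
  · obtain ⟨j, hj⟩ := hcol
    have := hF.two_mul_card_le_of_colCard_eq_zero hj
    omega
  push Not at hrow hcol
  have hlight := hF.card_lightRows_add_card_lightCols_le
  have hrows := hF.six_mul_card_add_card_lightCols_le hrow
  have hcols := hF.six_mul_card_add_card_lightRows_le hcol
  -- `hrows + hcols + 2 * hlight` gives `8 * #F ≥ 6 * (|α| + |β|)`. For `|α| = 4r + 3` equality
  -- would make all three tight: three more light columns than light rows, and `#F = 6r + 6` odd.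
  omega

theorem totalTwoDom_rookGraph_of_bars [DecidableEq α] [DecidableEq β]
    {A : Finset α} {B : Finset β} {g : α → β} {h : β → α}
    (hA : ∀ i ∉ A, ∃ j ∈ B, h j = i) (hB : ∀ j ∉ B, ∃ i ∈ A, g i = j)
    (hg : ∀ i ∈ A, 2 < #{i' ∈ A | g i' = g i}) (hh : ∀ j ∈ B, 2 < #{j' ∈ B | h j' = h j}) :
    TotalTwoDom (rookGraph α β) ↑(A.image (fun i => (i, g i)) ∪ B.image (fun j => (h j, j))) := by
  set F := A.image (fun i => (i, g i)) ∪ B.image (fun j => (h j, j))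
  have hrow (i : α) : 1 ≤ rowCard F i := by
    refine card_pos.2 ?_
    by_cases hi : i ∈ A
    · exact ⟨(i, g i), by simp [F, hi]⟩
    · obtain ⟨j, hj, rfl⟩ := hA i hi
      exact ⟨(h j, j), by simp [F, hj]⟩
  have hcol (j : β) : 1 ≤ colCard F j := by
    refine card_pos.2 ?_
    by_cases hj : j ∈ B
    · exact ⟨(h j, j), by simp [F, hj]⟩
    · obtain ⟨i, hi, rfl⟩ := hB j hj
      exact ⟨(i, g i), by simp [F, hi]⟩
  have hbar : ∀ v ∈ F, 3 ≤ rowCard F v.1 ∨ 3 ≤ colCard F v.2 := by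
    intro v hv
    rcases mem_union.1 hv with hv | hv
    · obtain ⟨i, hi, rfl⟩ := mem_image.1 hv
      refine Or.inr ((hg i hi).trans_le (card_le_card_of_injOn (fun i' => (i', g i')) ?_ ?_))
      · intro i' hi'
        obtain ⟨hi'A, hgi'⟩ := mem_filter.1 hi'
        simp [F, hi'A, hgi']
      · intro i₁ _ i₂ _ heq
        exact congrArg Prod.fst heq
    · obtain ⟨j, hj, rfl⟩ := mem_image.1 hv
      refine Or.inl ((hh j hj).trans_le (card_le_card_of_injOn (fun j' => (h j', j')) ?_ ?_))
      · intro j' hj'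
        obtain ⟨hj'B, hhj'⟩ := mem_filter.1 hj'
        simp [F, hj'B, hhj']
      · intro j₁ _ j₂ _ heq
        exact congrArg Prod.snd heq
  refine totalTwoDom_rookGraph_iff.2 fun v => ?_
  have := hrow v.1
  have := hcol v.2
  split_ifs with hv
  · rcases hbar v hv with h3 | h3 <;> omega
  · omega

end Rook

theorem exists_totalTwoDom_rookGraph_fin {n m p k : ℕ} (hp : 1 ≤ p) (hk : 1 ≤ k)
    (hpn : 3 * p + k ≤ n) (hkm : p + 3 * k ≤ m) :
    ∃ F : Finset (Fin n × Fin m), TotalTwoDom (rookGraph (Fin n) (Fin m)) ↑F ∧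
      #F + p + k ≤ n + m := by
  -- The rows `i < n - k` form `p` vertical bars in the columns `< p`, the columns `j ≥ p` form
  -- `k` horizontal bars in the last `k` rows; every bar has three cells, except that the last one
  -- of each kind takes the remainder.
  let A : Finset (Fin n) := Iio ⟨n - k, by omega⟩
  let B : Finset (Fin m) := Ici ⟨p, by omega⟩
  let g : Fin n → Fin m := fun i => ⟨min ((i : ℕ) / 3) (p - 1), by omega⟩
  let h : Fin m → Fin n := fun j => ⟨n - k + min (((j : ℕ) - p) / 3) (k - 1), by omega⟩
  have hA (i : Fin n) : i ∈ A ↔ (i : ℕ) < n - k := by simp [A, Fin.lt_def]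
  have hB (j : Fin m) : j ∈ B ↔ p ≤ (j : ℕ) := by simp [B, Fin.le_def]
  refine ⟨_, totalTwoDom_rookGraph_of_bars (A := A) (B := B) (g := g) (h := h) ?_ ?_ ?_ ?_, ?_⟩
  · intro i hi
    rw [hA] at hi
    refine ⟨⟨p + 3 * (i - (n - k)), by omega⟩, (hB _).2 (by simp), Fin.ext ?_⟩
    simp only [h]
    omega
  · intro j hj
    rw [hB] at hj
    refine ⟨⟨3 * j, by omega⟩, (hA _).2 (by simp; omega), Fin.ext ?_⟩
    simp only [g]
    omega
  · intro i hi
    rw [hA] at hi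
    set b := min ((i : ℕ) / 3) (p - 1)
    refine two_lt_card_iff.2 ⟨(⟨3 * b, by omega⟩ : Fin n), ⟨3 * b + 1, by omega⟩,
      ⟨3 * b + 2, by omega⟩, ?_, ?_, ?_, by simp [Fin.ext_iff], by simp [Fin.ext_iff],
      by simp [Fin.ext_iff]⟩ <;>
      simp only [mem_filter, hA, g, Fin.ext_iff] <;> omega
  · intro j hj
    rw [hB] at hj
    set c := min (((j : ℕ) - p) / 3) (k - 1)
    refine two_lt_card_iff.2 ⟨(⟨p + 3 * c, by omega⟩ : Fin m), ⟨p + 3 * c + 1, by omega⟩,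
      ⟨p + 3 * c + 2, by omega⟩, ?_, ?_, ?_, by simp [Fin.ext_iff], by simp [Fin.ext_iff],
      by simp [Fin.ext_iff]⟩ <;>
      simp only [mem_filter, hB, h, Fin.ext_iff] <;> omega
  · have := card_union_le (A.image fun i => (i, g i)) (B.image fun j => (h j, j))
    have := card_image_le (s := A) (f := fun i => (i, g i))
    have := card_image_le (s := B) (f := fun j => (h j, j))
    simp only [A, B, Fin.card_Iio, Fin.card_Ici] at *
    omega

theorem gamma2t_le_ncard {V : Type*} [Fintype V] {G : SimpleGraph V} {S : Set V}
    (hS : TotalTwoDom G S) : gamma2t G ≤ S.ncard :=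
  Nat.sInf_le ⟨S, hS, rfl⟩

theorem exists_totalTwoDom_ncard_eq_gamma2t {V : Type*} [Fintype V] {G : SimpleGraph V}
    {S : Set V} (hS : TotalTwoDom G S) : ∃ T, TotalTwoDom G T ∧ T.ncard = gamma2t G :=
  Nat.sInf_mem (s := {k | ∃ T : Set V, TotalTwoDom G T ∧ T.ncard = k}) ⟨_, S, hS, rfl⟩

theorem stmt_19 (n : ℕ) (hn : 4 ≤ n) :
    (n % 2 = 0 → 2 * gamma2t (K n □ K (n + 2)) = 3 * n + 4) ∧
    (n % 4 = 1 → 2 * gamma2t (K n □ K (n + 2)) = 3 * n + 3) ∧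
    (n % 4 = 3 → 2 * gamma2t (K n □ K (n + 2)) = 3 * n + 5) := by
  -- `p + k` is as large as `3p + k ≤ n` and `p + 3k ≤ n + 2` allow.
  obtain ⟨F, hF, hFcard⟩ := exists_totalTwoDom_rookGraph_fin (n := n) (m := n + 2)
    (p := n / 4) (k := (n + 3) / 4) (by omega) (by omega) (by omega) (by omega)
  have hupper := gamma2t_le_ncard (G := K n □ K (n + 2)) hF
  obtain ⟨S, hS, hγ⟩ := exists_totalTwoDom_ncard_eq_gamma2t (G := K n □ K (n + 2)) hF
  lift S to Finset (Fin n × Fin (n + 2)) using S.toFinite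
  have hlower := TotalTwoDom.rook_card_lower_bound (α := Fin n) (β := Fin (n + 2)) hS (by simp)
    (by simpa using hn)
  rw [Set.ncard_coe_finset] at hupper hγ
  simp only [Fintype.card_fin] at hlower
  refine ⟨fun _ => ?_, fun _ => ?_, fun _ => ?_⟩ <;> omega
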